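/- arXiv:1309.7232 — 7 statements merged into one kernel-verified Lean document; each statement's English description precedes it below -/
import Mathlib

section
/- Let S be a real-linear endomorphism of E = V ⊕ V* with S² = λ·id (λ = ±1). Then S is skew-symmetric for b and anti-commutes with J_ℓ if and only if b_ℓ(Sx, Sy) = −λ · conj(b_ℓ(x, y)) for all x, y ∈ E. Moreover, in this case, if λ = 1 then S is split (its 1- and (−1)-eigenspaces have equal dimension), since J_ℓ interchanges the eigenspaces of S. -/
/-!
Splitting `b_ℓ(Sx, Sy) = -λ conj (b_ℓ(x, y))` into real and imaginary parts gives
`b(Sx, Sy) = -λ b(x, y)` and `b(Sx, J Sy) = λ b(x, J y)`. As `S² = λ` is invertible, the first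
is skew-symmetry of `S`; for skew `S` the second reads `b(x, S J S y) = -λ b(x, J y)`, so
`S J S = -λ J` by nondegeneracy of `b`, and composing with `S` gives `S J = -J S`. Finally an
invertible `J` anticommuting with `S` maps the `μ`-eigenspace of `S` onto the `-μ`-eigenspace.
-/

open Module

section Skew

variable {K E : Type*} [Field K] [AddCommGroup E] [Module K E]
  {B : LinearMap.BilinForm K E} {S J : End K E} {lam : K}

theorem skew_iff_apply_apply_eq_neg_mul (hS : ∀ x, S (S x) = lam • x) (hlam : lam ≠ 0) :
    (∀ x y, B (S x) y = -B x (S y)) ↔ ∀ x y, B (S x) (S y) = -(lam * B x y) := by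
  refine ⟨fun hskew x y => by rw [hskew, hS, map_smul, smul_eq_mul], fun h x y => ?_⟩
  have := h x (S y)
  rw [hS, map_smul, smul_eq_mul, ← mul_neg] at this
  exact mul_left_cancel₀ hlam this

theorem anticomm_iff_of_skew (hB : B.SeparatingRight) (hS : ∀ x, S (S x) = lam • x)
    (hlam : lam ≠ 0) (hskew : ∀ x y, B (S x) y = -B x (S y)) :
    (∀ x, S (J x) = -J (S x)) ↔ ∀ x y, B (S x) (J (S y)) = lam * B x (J y) := by
  refine ⟨fun hanti x y => ?_, fun h y => ?_⟩
  · rw [← neg_neg (J (S y)), ← hanti, map_neg, hskew, hS, map_smul, smul_eq_mul, neg_neg]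
  · have hSJS : S (J (S y)) = -(lam • J y) := by
      refine eq_neg_of_add_eq_zero_left (hB _ fun x => ?_)
      rw [map_add, map_smul, smul_eq_mul, ← neg_neg (B x (S _)), ← hskew, h]
      ring
    have : lam • J (S y) = lam • -S (J y) := by
      rw [← hS, hSJS, map_neg, map_smul, smul_neg]
    rw [smul_right_injective E hlam this, neg_neg]

theorem skew_and_anticomm_iff (hB : B.SeparatingRight) (hS : ∀ x, S (S x) = lam • x)
    (hlam : lam ≠ 0) :
    ((∀ x y, B (S x) y = -B x (S y)) ∧ ∀ x, S (J x) = -J (S x)) ↔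
      (∀ x y, B (S x) (S y) = -(lam * B x y)) ∧ ∀ x y, B (S x) (J (S y)) = lam * B x (J y) := by
  rw [← skew_iff_apply_apply_eq_neg_mul hS hlam]
  exact and_congr_right (anticomm_iff_of_skew hB hS hlam)

end Skew

theorem finrank_eigenspace_neg_eq {K E : Type*} [CommRing K] [AddCommGroup E] [Module K E]
    {S : End K E} (J : E ≃ₗ[K] E) (hanti : ∀ x, S (J x) = -J (S x)) (μ : K) :
    finrank K (S.eigenspace (-μ)) = finrank K (S.eigenspace μ) := by
  have hmap : (S.eigenspace μ).map (J : E →ₗ[K] E) = S.eigenspace (-μ) := by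
    ext x
    obtain ⟨y, rfl⟩ := J.surjective x
    rw [Submodule.mem_map_equiv, LinearEquiv.symm_apply_apply, End.mem_eigenspace_iff,
      End.mem_eigenspace_iff, hanti, neg_smul, neg_inj, ← map_smul, J.injective.eq_iff]
  rw [← hmap, LinearEquiv.finrank_map_eq]

theorem Complex.ofReal_sub_I_mul_eq_neg_mul_conj_iff (a b c d t : ℝ) :
    (a : ℂ) - I * b = -t * (starRingEnd ℂ) ((c : ℂ) - I * d) ↔ a = -(t * c) ∧ b = t * d := by
  simp [Complex.ext_iff]

def prodDualPairing (K V : Type*) [CommRing K] [AddCommGroup V] [Module K V] :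
    LinearMap.BilinForm K (V × Dual K V) :=
  (LinearMap.dualProd K V).compl₁₂ (LinearEquiv.prodComm K _ _).toLinearMap
    (LinearEquiv.prodComm K _ _).toLinearMap

@[simp]
theorem prodDualPairing_apply {K V : Type*} [CommRing K] [AddCommGroup V] [Module K V]
    (x y : V × Dual K V) : prodDualPairing K V x y = y.2 x.1 + x.2 y.1 := by
  simp [prodDualPairing, add_comm]

theorem prodDualPairing_separatingRight (K V : Type*) [Field K] [AddCommGroup V] [Module K V] :
    (prodDualPairing K V).SeparatingRight := by
  intro z hz
  refine Prod.ext ?_ (LinearMap.ext fun v => by simpa using hz (v, 0))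
  exact (forall_dual_apply_eq_zero_iff K _).mp fun τ => by simpa using hz (0, τ)

theorem prodMap_smul_dualMap_apply_apply {K V : Type*} [CommRing K] [AddCommGroup V] [Module K V]
    {j : End K V} (hj : ∀ v, j (j v) = -v) {ℓ : K} (hℓ : ℓ * ℓ = 1) (x : V × Dual K V) :
    j.prodMap (ℓ • j.dualMap) (j.prodMap (ℓ • j.dualMap) x) = -x := by
  refine Prod.ext (by simp [hj]) (LinearMap.ext fun v => ?_)
  simp [smul_smul, hℓ, hj]

theorem stmt4_general (V : Type*) [AddCommGroup V] [Module ℝ V]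
    (j : V →ₗ[ℝ] V) (hj : ∀ v, j (j v) = -v)
    (ℓ lam : ℝ) (hℓ : ℓ = 1 ∨ ℓ = -1) (hlam : lam = 1 ∨ lam = -1)
    (b : (V × Module.Dual ℝ V) → (V × Module.Dual ℝ V) → ℝ)
    (hb : ∀ x y, b x y = y.2 x.1 + x.2 y.1)
    (J : (V × Module.Dual ℝ V) → (V × Module.Dual ℝ V))
    (hJ : ∀ x, J x = (j x.1, ℓ • j.dualMap x.2))
    (bl : (V × Module.Dual ℝ V) → (V × Module.Dual ℝ V) → ℂ)
    (hbl : ∀ x y, bl x y = (b x y : ℂ) - Complex.I * (b x (J y) : ℂ))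
    (S : Module.End ℝ (V × Module.Dual ℝ V))
    (hS : ∀ x, S (S x) = lam • x) :
    (((∀ x y, b (S x) y = - b x (S y)) ∧ (∀ x, S (J x) = - J (S x))) ↔
      (∀ x y, bl (S x) (S y) = -(lam : ℂ) * (starRingEnd ℂ) (bl x y))) ∧
    ((∀ x y, b (S x) y = - b x (S y)) → (∀ x, S (J x) = - J (S x)) → lam = 1 →
      Module.finrank ℝ (S.eigenspace 1) = Module.finrank ℝ (S.eigenspace (-1))) := by
  have hlam0 : lam ≠ 0 := by rcases hlam with rfl | rfl <;> norm_num
  set Jl := j.prodMap (ℓ • j.dualMap)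
  have hJl : ∀ x, J x = Jl x := hJ
  have hbB : ∀ x y, b x y = prodDualPairing ℝ V x y := by simp [hb]
  have hJJ : ∀ x, Jl (Jl x) = -x :=
    prodMap_smul_dualMap_apply_apply hj (by rcases hℓ with rfl | rfl <;> norm_num)
  simp only [hbl, hbB, hJl, Complex.ofReal_sub_I_mul_eq_neg_mul_conj_iff, forall_and]
  refine ⟨skew_and_anticomm_iff (prodDualPairing_separatingRight ℝ V) hS hlam0,
    fun _ hanti _ => ?_⟩
  let Je : (V × Dual ℝ V) ≃ₗ[ℝ] (V × Dual ℝ V) :=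
    .ofLinearMap Jl (-Jl) (LinearMap.ext fun x => by simp [hJJ]) (LinearMap.ext fun x => by simp [hJJ])
  exact (finrank_eigenspace_neg_eq Je hanti 1).symm

/-- for `S` with `S² = λ·id`, `S` is skew-symmetric for `b` and
anti-commutes with `J_ℓ` iff `b_ℓ(Sx, Sy) = -λ conj (b_ℓ(x,y))`; moreover in
this case, if `λ = 1` then `S` is split (its `±1`-eigenspaces have equal
dimension). -/
theorem stmt4 (V : Type*) [AddCommGroup V] [Module ℝ V] [FiniteDimensional ℝ V]
    (j : V →ₗ[ℝ] V) (hj : ∀ v, j (j v) = -v)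
    (ℓ lam : ℝ) (hℓ : ℓ = 1 ∨ ℓ = -1) (hlam : lam = 1 ∨ lam = -1)
    (b : (V × Module.Dual ℝ V) → (V × Module.Dual ℝ V) → ℝ)
    (hb : ∀ x y, b x y = y.2 x.1 + x.2 y.1)
    (J : (V × Module.Dual ℝ V) → (V × Module.Dual ℝ V))
    (hJ : ∀ x, J x = (j x.1, ℓ • j.dualMap x.2))
    (bl : (V × Module.Dual ℝ V) → (V × Module.Dual ℝ V) → ℂ)
    (hbl : ∀ x y, bl x y = (b x y : ℂ) - Complex.I * (b x (J y) : ℂ))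
    (S : Module.End ℝ (V × Module.Dual ℝ V))
    (hS : ∀ x, S (S x) = lam • x) :
    (((∀ x y, b (S x) y = - b x (S y)) ∧ (∀ x, S (J x) = - J (S x))) ↔
      (∀ x y, bl (S x) (S y) = -(lam : ℂ) * (starRingEnd ℂ) (bl x y))) ∧
    ((∀ x y, b (S x) y = - b x (S y)) → (∀ x, S (J x) = - J (S x)) → lam = 1 →
      Module.finrank ℝ (S.eigenspace 1) = Module.finrank ℝ (S.eigenspace (-1))) :=
  stmt4_general V j hj ℓ lam hℓ hlam b hb J hJ bl hbl S hS
end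

section
/- Let (V, j) be a 2m-dimensional real vector space with complex structure, E = V ⊕ V*, J₊ = diag(j, j*), b the canonical pairing. Let S be an endomorphism of E with S² = id, S skew-symmetric for b, S split, and S J₊ = −J₊ S. Then the bilinear form β_S(x, y) = b(S J₊ x, y) on E is symmetric, and its signature is (2n, 4m−2n) for some integer 0 ≤ n ≤ 2m; in particular both indices of the signature are even. -/
/-!
Put `T = S J₊`, so that `β(x, y) = b(T x, y)`. Then `T` is a `b`-self-adjoint involution
anticommuting with `J₊`; hence `E` is the `β`-orthogonal sum of the eigenspaces `E₊ ⊕ E₋` of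
`T`, and `J₊` maps `E₊` onto `E₋` preserving `x ↦ β(x, x)`. So `β` is the orthogonal sum of two
isometric copies of the nondegenerate form `β|E₊`, and each index of its signature is twice the
corresponding index of `β|E₊`.
-/

/-- A real bilinear form `β` on `E` has signature `(p, q)`: a maximal
positive-definite subspace has dimension `p` and a maximal negative-definite
subspace has dimension `q`. -/
def HasSignature {E : Type*} [AddCommGroup E] [Module ℝ E]
    (β : E → E → ℝ) (p q : ℕ) : Prop :=
  ((∃ P : Submodule ℝ E, Module.finrank ℝ P = p ∧ ∀ x ∈ P, x ≠ 0 → 0 < β x x) ∧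
    ∀ P : Submodule ℝ E, (∀ x ∈ P, x ≠ 0 → 0 < β x x) → Module.finrank ℝ P ≤ p) ∧
  ((∃ N : Submodule ℝ E, Module.finrank ℝ N = q ∧ ∀ x ∈ N, x ≠ 0 → β x x < 0) ∧
    ∀ N : Submodule ℝ E, (∀ x ∈ N, x ≠ 0 → β x x < 0) → Module.finrank ℝ N ≤ q)

open Module Submodule QuadraticMap

section Signature

variable {E : Type*} [AddCommGroup E] [Module ℝ E] {Q : QuadraticForm ℝ E} {W : Submodule ℝ E}
  {J : E →ₗ[ℝ] E}

lemma posDef_restrict_iff {V : Submodule ℝ E} :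
    (Q.restrict V).PosDef ↔ ∀ x ∈ V, x ≠ 0 → 0 < Q x := by
  simp [PosDef]

lemma posDef_restrict_neg_iff {V : Submodule ℝ E} :
    ((-Q).restrict V).PosDef ↔ ∀ x ∈ V, x ≠ 0 → Q x < 0 := by
  simp [posDef_restrict_iff]

lemma posDef_restrict_sup_map (hJ : ∀ x, Q (J x) = Q x)
    (horth : ∀ x ∈ W, ∀ y ∈ W, Q.IsOrtho x (J y)) {P : Submodule ℝ E} (hPW : P ≤ W)
    (hP : (Q.restrict P).PosDef) : (Q.restrict (P ⊔ P.map J)).PosDef := by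
  have hP' := posDef_restrict_iff.1 hP
  rw [posDef_restrict_iff]
  intro z hz hz0
  obtain ⟨x, hx, _, ⟨y, hy, rfl⟩, rfl⟩ := mem_sup.1 hz
  rw [horth x (hPW hx) y (hPW hy), hJ]
  rcases eq_or_ne x 0 with rfl | hx0
  · have hy0 : y ≠ 0 := by rintro rfl; simp at hz0
    simpa using hP' y hy hy0
  · have hy_nonneg : 0 ≤ Q y := hP.nonneg ⟨y, hy⟩
    linarith [hP' x hx hx0]

lemma radical_restrict_eq_bot (hQ : Q.radical = ⊥) {W' : Submodule ℝ E} (hW : W ⊔ W' = ⊤)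
    (horth : ∀ x ∈ W, ∀ y ∈ W', Q.IsOrtho x y) : (Q.restrict W).radical = ⊥ := by
  rw [eq_bot_iff]
  rintro ⟨x, hxW⟩ ⟨hQx, hpolar⟩
  suffices x ∈ Q.radical by simpa [hQ] using this
  refine ⟨hQx, LinearMap.ext fun z => ?_⟩
  obtain ⟨w, hw, w', hw', rfl⟩ := mem_sup.1 (hW ▸ mem_top : z ∈ W ⊔ W')
  have hw0 : polar Q x w = 0 := LinearMap.congr_fun hpolar ⟨w, hw⟩
  simp [polar_add_right, hw0, (horth x hxW w' hw').polar_eq_zero]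

variable [FiniteDimensional ℝ E]

theorem hasSignature_sigPos_sigNeg (Q : QuadraticForm ℝ E) {β : E → E → ℝ}
    (hβ : ∀ x, β x x = Q x) : HasSignature β (sigPos Q) (sigNeg Q) := by
  simp only [HasSignature, hβ]
  exact ⟨⟨(exists_finrank_eq_sigPos_and_posDef Q).imp fun _ => .imp_right posDef_restrict_iff.1,
      fun _ hP => le_sigPos_of_posDef Q (posDef_restrict_iff.2 hP)⟩,
    (exists_finrank_eq_sigNeg_and_negDef Q).imp fun _ => .imp_right posDef_restrict_neg_iff.1,
      fun _ hN => le_sigNeg_of_negDef Q (posDef_restrict_neg_iff.2 hN)⟩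

lemma finrank_sup_map_of_le (hJ : Function.Injective J) (hW : Disjoint W (W.map J))
    {P : Submodule ℝ E} (hPW : P ≤ W) : finrank ℝ ↥(P ⊔ P.map J) = 2 * finrank ℝ P := by
  have h := finrank_sup_add_finrank_inf_eq P (P.map J)
  rw [(hW.mono hPW (map_mono hPW)).eq_bot, finrank_bot,
    ← (equivMapOfInjective J hJ P).finrank_eq] at h
  omega

lemma two_mul_sigPos_restrict_le (hJinj : Function.Injective J) (hW : Disjoint W (W.map J))
    (hJ : ∀ x, Q (J x) = Q x) (horth : ∀ x ∈ W, ∀ y ∈ W, Q.IsOrtho x (J y)) :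
    2 * sigPos (Q.restrict W) ≤ sigPos Q := by
  obtain ⟨P₀, hrank, hP₀⟩ := exists_finrank_eq_sigPos_and_posDef (Q.restrict W)
  have hPW : P₀.map W.subtype ≤ W := map_subtype_le W P₀
  have hP : (Q.restrict (P₀.map W.subtype)).PosDef := by
    rw [posDef_restrict_iff]
    rintro _ ⟨x, hx, rfl⟩ hx0
    exact hP₀ ⟨x, hx⟩ (by simpa using hx0)
  calc 2 * sigPos (Q.restrict W)
      = finrank ℝ ↥(P₀.map W.subtype ⊔ (P₀.map W.subtype).map J) := by
        rw [finrank_sup_map_of_le hJinj hW hPW, finrank_map_subtype_eq, hrank]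
    _ ≤ sigPos Q := le_sigPos_of_posDef Q (posDef_restrict_sup_map hJ horth hPW hP)

theorem sigPos_eq_two_mul_sigPos_restrict (hQ : Q.radical = ⊥) (hJinj : Function.Injective J)
    (hW : IsCompl W (W.map J)) (hJ : ∀ x, Q (J x) = Q x)
    (horth : ∀ x ∈ W, ∀ y ∈ W, Q.IsOrtho x (J y)) :
    sigPos Q = 2 * sigPos (Q.restrict W) := by
  have hpos := two_mul_sigPos_restrict_le hJinj hW.disjoint hJ horth
  have hneg : 2 * sigNeg (Q.restrict W) ≤ sigNeg Q :=
    two_mul_sigPos_restrict_le (Q := -Q) hJinj hW.disjoint (by simp [hJ]) fun x hx y hy => by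
      rw [isOrtho_def, neg_apply, neg_apply, neg_apply, isOrtho_def.1 (horth x hx y hy), neg_add]
  have hWrad : (Q.restrict W).radical = ⊥ :=
    radical_restrict_eq_bot hQ hW.sup_eq_top fun x hx _ ⟨y, hy, hJy⟩ => hJy ▸ horth x hx y hy
  have hEsig := QuadraticForm.sigPos_add_sigNeg_add_radical (Q := Q)
  have hWsig := QuadraticForm.sigPos_add_sigNeg_add_radical (Q := Q.restrict W)
  have hEdim := finrank_add_eq_of_isCompl hW
  rw [hQ, finrank_bot] at hEsig
  rw [hWrad, finrank_bot] at hWsig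
  rw [← (equivMapOfInjective J hJinj W).finrank_eq] at hEdim
  -- both `sigPos + sigNeg` are full dimensions, so neither doubling inequality can be strict
  omega

end Signature

section Involution

variable {K V : Type*} [Field K] [AddCommGroup V] [Module K V]

theorem isCompl_eigenspace_one_neg_one [CharZero K] {T : Module.End K V} (hT : ∀ x, T (T x) = x) :
    IsCompl (T.eigenspace 1) (T.eigenspace (-1)) := by
  refine ⟨disjoint_def.2 fun x h₁ h₂ => ?_, codisjoint_iff_exists_add_eq.2 fun x => ?_⟩
  · rw [Module.End.mem_eigenspace_iff] at h₁ h₂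
    have h2x : (2 : K) • x = 0 := by linear_combination (norm := module) h₂ - h₁
    exact (smul_eq_zero.1 h2x).resolve_left two_ne_zero
  · refine ⟨(2⁻¹ : K) • (x + T x), (2⁻¹ : K) • (x - T x), ?_, ?_, by module⟩ <;>
      simp only [Module.End.mem_eigenspace_iff, map_smul, map_add, map_sub, hT] <;> module

theorem map_eigenspace_one_of_anticomm {T J : Module.End K V} (hJ : ∀ x, J (J x) = -x)
    (hTJ : ∀ x, T (J x) = -J (T x)) : (T.eigenspace 1).map J = T.eigenspace (-1) := by
  ext z
  simp only [mem_map, Module.End.mem_eigenspace_iff, one_smul, neg_smul]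
  constructor
  · rintro ⟨x, hx, rfl⟩
    rw [hTJ, hx]
  · intro hz
    exact ⟨-J z, by rw [map_neg, hTJ, hz, map_neg, neg_neg], by rw [map_neg, hJ, neg_neg]⟩

end Involution

section Anticommuting

variable {R E : Type*} [CommRing R] [AddCommGroup E] [Module R E] {S J : Module.End R E}

lemma comp_apply_comp_apply_of_anticomm (hJ : ∀ x, J (J x) = -x) (hS : ∀ x, S (S x) = x)
    (hSJ : ∀ x, S (J x) = -J (S x)) (x : E) : (S ∘ₗ J) ((S ∘ₗ J) x) = x := by
  simp only [LinearMap.comp_apply, hSJ (S (J x)), hS, hJ, neg_neg]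

lemma comp_apply_of_anticomm (hJ : ∀ x, J (J x) = -x) (hSJ : ∀ x, S (J x) = -J (S x)) (x : E) :
    (S ∘ₗ J) (J x) = -J ((S ∘ₗ J) x) := by
  simp only [LinearMap.comp_apply, hJ, hSJ, map_neg, neg_neg]

lemma bilin_comp_apply_of_anticomm {B : LinearMap.BilinForm R E}
    (hBJ : ∀ x y, B (J x) y = B x (J y)) (hBS : ∀ x y, B (S x) y = -B x (S y))
    (hSJ : ∀ x, S (J x) = -J (S x)) (x y : E) : B ((S ∘ₗ J) x) y = B x ((S ∘ₗ J) y) := by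
  rw [LinearMap.comp_apply, LinearMap.comp_apply, hBS, hBJ, hSJ y, map_neg]

end Anticommuting

lemma LinearMap.SeparatingLeft.comp_of_injective {R E : Type*} [CommRing R] [AddCommGroup E]
    [Module R E] {B : LinearMap.BilinForm R E} (hB : B.SeparatingLeft) {T : Module.End R E}
    (hT : Function.Injective T) : (B ∘ₗ T).SeparatingLeft :=
  fun x hx => hT (by rw [map_zero]; exact hB _ hx)

section SelfAdjoint

open LinearMap (BilinMap)

variable {E : Type*} [AddCommGroup E] [Module ℝ E] {B : LinearMap.BilinForm ℝ E}
  {T : Module.End ℝ E}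

lemma radical_toQuadraticMap_eq_bot (hB : LinearMap.IsSymm B) (hsep : B.SeparatingLeft) :
    B.toQuadraticMap.radical = ⊥ := by
  rwa [radical_eq_ker_associated, associated_left_inverse ℝ hB.eq,
    ← LinearMap.separatingLeft_iff_ker_eq_bot]

lemma isSymm_comp (hB : LinearMap.IsSymm B) (hT : ∀ x y, B (T x) y = B x (T y)) :
    (B ∘ₗ T).IsSymm :=
  LinearMap.isSymm_def.2 fun x y => by simp [hT x y, hB.eq]

lemma toQuadraticMap_comp_isOrtho (hB : LinearMap.IsSymm B) (hT : ∀ x y, B (T x) y = B x (T y))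
    {x y : E} (hx : x ∈ T.eigenspace 1) (hy : y ∈ T.eigenspace (-1)) :
    (BilinMap.toQuadraticMap (B ∘ₗ T)).IsOrtho x y := by
  rw [Module.End.mem_eigenspace_iff, one_smul] at hx
  rw [Module.End.mem_eigenspace_iff, neg_one_smul] at hy
  have hxy := hT x y
  rw [hx, hy, map_neg] at hxy
  rw [LinearMap.BilinForm.toQuadraticMap_isOrtho (isSymm_comp hB hT), LinearMap.comp_apply, hx]
  linarith

lemma toQuadraticMap_comp_apply_of_anticomm {J : Module.End ℝ E}
    (hBJ : ∀ x y, B (J x) y = B x (J y)) (hJ : ∀ x, J (J x) = -x)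
    (hTJ : ∀ x, T (J x) = -J (T x)) (x : E) :
    BilinMap.toQuadraticMap (B ∘ₗ T) (J x) = BilinMap.toQuadraticMap (B ∘ₗ T) x := by
  simp only [LinearMap.BilinMap.toQuadraticMap_apply, LinearMap.comp_apply, hTJ, map_neg,
    LinearMap.neg_apply, hBJ, hJ, neg_neg]

variable [FiniteDimensional ℝ E]

theorem exists_hasSignature_two_mul_of_anticomm {J : Module.End ℝ E} (hB : LinearMap.IsSymm B)
    (hsep : B.SeparatingLeft) (hBJ : ∀ x y, B (J x) y = B x (J y)) (hJ : ∀ x, J (J x) = -x)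
    (hT2 : ∀ x, T (T x) = x) (hBT : ∀ x y, B (T x) y = B x (T y))
    (hTJ : ∀ x, T (J x) = -J (T x)) :
    ∃ n, 2 * n ≤ finrank ℝ E ∧
      HasSignature (fun x y => B (T x) y) (2 * n) (finrank ℝ E - 2 * n) := by
  set Q := BilinMap.toQuadraticMap (B ∘ₗ T)
  have hQ : Q.radical = ⊥ := radical_toQuadraticMap_eq_bot (isSymm_comp hB hBT)
    (hsep.comp_of_injective (Function.LeftInverse.injective hT2))
  have hmap := map_eigenspace_one_of_anticomm hJ hTJ
  have hcompl := isCompl_eigenspace_one_neg_one hT2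
  rw [← hmap] at hcompl
  have hJinj : Function.Injective J := fun x y h => by simpa [hJ] using congrArg J h
  have horth : ∀ x ∈ T.eigenspace 1, ∀ y ∈ T.eigenspace 1, Q.IsOrtho x (J y) :=
    fun x hx y hy => toQuadraticMap_comp_isOrtho hB hBT hx (hmap ▸ mem_map_of_mem hy)
  obtain ⟨n, hn⟩ : ∃ n, sigPos Q = 2 * n := ⟨_, sigPos_eq_two_mul_sigPos_restrict (Q := Q)
    hQ hJinj hcompl (toQuadraticMap_comp_apply_of_anticomm hBJ hJ hTJ) horth⟩
  have htotal := QuadraticForm.sigPos_add_sigNeg_add_radical (Q := Q)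
  rw [hQ, finrank_bot, add_zero] at htotal
  refine ⟨n, by omega, ?_⟩
  rw [← hn, ← htotal, Nat.add_sub_cancel_left]
  exact hasSignature_sigPos_sigNeg Q fun x => rfl

end SelfAdjoint

section DualPairing

variable (V : Type*) [AddCommGroup V] [Module ℝ V]

def canonicalPairing : LinearMap.BilinForm ℝ (V × Dual ℝ V) :=
  (LinearMap.dualProd ℝ V).compl₁₂ (LinearEquiv.prodComm ℝ V (Dual ℝ V)).toLinearMap
    (LinearEquiv.prodComm ℝ V (Dual ℝ V)).toLinearMap

variable {V}

@[simp]
lemma canonicalPairing_apply (x y : V × Dual ℝ V) :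
    canonicalPairing V x y = y.2 x.1 + x.2 y.1 := by
  simp [canonicalPairing, add_comm]

lemma canonicalPairing_isSymm : LinearMap.IsSymm (canonicalPairing V) :=
  LinearMap.isSymm_def.2 fun x y => by simp [add_comm]

lemma canonicalPairing_separatingLeft : (canonicalPairing V).SeparatingLeft := by
  intro x hx
  ext1
  · rw [Prod.fst_zero, ← Module.forall_dual_apply_eq_zero_iff ℝ x.1]
    intro φ
    simpa using hx (0, φ)
  · ext v
    simpa using hx (v, 0)

lemma canonicalPairing_prodMap_dualMap (j : V →ₗ[ℝ] V) (x y : V × Dual ℝ V) :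
    canonicalPairing V (j.prodMap j.dualMap x) y =
      canonicalPairing V x (j.prodMap j.dualMap y) := by
  simp

lemma prodMap_dualMap_apply_apply {j : V →ₗ[ℝ] V} (hj : ∀ v, j (j v) = -v)
    (x : V × Dual ℝ V) :
    j.prodMap j.dualMap (j.prodMap j.dualMap x) = -x := by
  ext <;> simp [hj]

end DualPairing

theorem stmt5_general (V : Type*) [AddCommGroup V] [Module ℝ V] [FiniteDimensional ℝ V]
    (m : ℕ) (hdim : Module.finrank ℝ V = 2 * m)
    (j : V →ₗ[ℝ] V) (hj : ∀ v, j (j v) = -v)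
    (b : (V × Module.Dual ℝ V) → (V × Module.Dual ℝ V) → ℝ)
    (hb : ∀ x y, b x y = y.2 x.1 + x.2 y.1)
    (J : (V × Module.Dual ℝ V) → (V × Module.Dual ℝ V))
    (hJ : ∀ x, J x = (j x.1, j.dualMap x.2))
    (S : Module.End ℝ (V × Module.Dual ℝ V))
    (hS2 : ∀ x, S (S x) = x)
    (hskew : ∀ x y, b (S x) y = - b x (S y))
    (hanti : ∀ x, S (J x) = - J (S x))
    (β : (V × Module.Dual ℝ V) → (V × Module.Dual ℝ V) → ℝ)
    (hβ : ∀ x y, β x y = b (S (J x)) y) :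
    (∀ x y, β x y = β y x) ∧
    ∃ n : ℕ, n ≤ 2 * m ∧ HasSignature β (2 * n) (4 * m - 2 * n) := by
  set B := canonicalPairing V
  set J' := j.prodMap j.dualMap
  have hb' : ∀ x y, b x y = B x y := fun x y => by simp [B, hb]
  have hJ' : ∀ x, J x = J' x := hJ
  have hJ2 : ∀ x, J' (J' x) = -x := prodMap_dualMap_apply_apply hj
  have hSJ : ∀ x, S (J' x) = -J' (S x) := by simpa only [hJ'] using hanti
  have hBS : ∀ x y, B (S x) y = -B x (S y) := by simpa only [hb'] using hskew
  have hBJ := canonicalPairing_prodMap_dualMap j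
  have hBT := bilin_comp_apply_of_anticomm hBJ hBS hSJ
  obtain rfl : β = fun x y => B ((S ∘ₗ J') x) y :=
    funext₂ fun x y => by rw [hβ, hb', hJ']; rfl
  obtain ⟨n, hn, hsig⟩ := exists_hasSignature_two_mul_of_anticomm canonicalPairing_isSymm
    canonicalPairing_separatingLeft hBJ hJ2 (comp_apply_comp_apply_of_anticomm hJ2 hS2 hSJ) hBT
    (comp_apply_of_anticomm hJ2 hSJ)
  have hE : finrank ℝ (V × Dual ℝ V) = 4 * m := by
    rw [finrank_prod, Subspace.dual_finrank_eq, hdim]; ring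
  rw [hE] at hn hsig
  exact ⟨fun x y => (isSymm_comp canonicalPairing_isSymm hBT).eq x y, n, by omega, hsig⟩

/-- for a split, `b`-skew-symmetric involution `S` of `E = V ⊕ V*`
anti-commuting with `J₊`, the form `β_S(x,y) = b(S J₊ x, y)` is symmetric of
signature `(2n, 4m - 2n)` for some `0 ≤ n ≤ 2m`. -/
theorem stmt5 (V : Type*) [AddCommGroup V] [Module ℝ V] [FiniteDimensional ℝ V]
    (m : ℕ) (hdim : Module.finrank ℝ V = 2 * m)
    (j : V →ₗ[ℝ] V) (hj : ∀ v, j (j v) = -v)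
    (b : (V × Module.Dual ℝ V) → (V × Module.Dual ℝ V) → ℝ)
    (hb : ∀ x y, b x y = y.2 x.1 + x.2 y.1)
    (J : (V × Module.Dual ℝ V) → (V × Module.Dual ℝ V))
    (hJ : ∀ x, J x = (j x.1, j.dualMap x.2))
    (S : Module.End ℝ (V × Module.Dual ℝ V))
    (hS2 : ∀ x, S (S x) = x)
    (hskew : ∀ x y, b (S x) y = - b x (S y))
    (hsplit : Module.finrank ℝ (S.eigenspace 1) = Module.finrank ℝ (S.eigenspace (-1)))
    (hanti : ∀ x, S (J x) = - J (S x))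
    (β : (V × Module.Dual ℝ V) → (V × Module.Dual ℝ V) → ℝ)
    (hβ : ∀ x y, β x y = b (S (J x)) y) :
    (∀ x y, β x y = β y x) ∧
    ∃ n : ℕ, n ≤ 2 * m ∧ HasSignature β (2 * n) (4 * m - 2 * n) :=
  stmt5_general V m hdim j hj b hb J hJ S hS2 hskew hanti β hβ
end

section
/- Let (V, j) be as above with dim_ℝ V = 2m, and let r be an endomorphism of V with r² = id, rj = −jr, and r split. Set R = diag(r, −r*) on E = V ⊕ V*. Then R anti-commutes with J₊ = diag(j, j*), R is skew-symmetric for b, R² = id, and the symmetric form β_R(x, y) = b(R J₊ x, y) is split, i.e., has signature (2m, 2m). -/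
open Module

section Signature

variable {E : Type*} [AddCommGroup E] [Module ℝ E] {β : E → E → ℝ}

lemma disjoint_of_pos_of_neg {P N : Submodule ℝ E} (hP : ∀ x ∈ P, x ≠ 0 → 0 < β x x)
    (hN : ∀ x ∈ N, x ≠ 0 → β x x < 0) : Disjoint P N := by
  rw [Submodule.disjoint_def]
  intro x hxP hxN
  by_contra hx
  exact (hP x hxP hx).not_gt (hN x hxN hx)

theorem hasSignature_of_finrank_add_eq [FiniteDimensional ℝ E] {P N : Submodule ℝ E}
    (hP : ∀ x ∈ P, x ≠ 0 → 0 < β x x) (hN : ∀ x ∈ N, x ≠ 0 → β x x < 0)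
    (hPN : finrank ℝ P + finrank ℝ N = finrank ℝ E) :
    HasSignature β (finrank ℝ P) (finrank ℝ N) := by
  refine ⟨⟨⟨P, rfl, hP⟩, fun P' hP' => ?_⟩, ⟨N, rfl, hN⟩, fun N' hN' => ?_⟩
  · have := Submodule.finrank_add_finrank_le_of_disjoint (disjoint_of_pos_of_neg hP' hN)
    omega
  · have := Submodule.finrank_add_finrank_le_of_disjoint (disjoint_of_pos_of_neg hP hN')
    omega

end Signature

lemma LinearMap.finrank_graph {K M M₂ : Type*} [DivisionRing K] [AddCommGroup M] [Module K M]
    [AddCommGroup M₂] [Module K M₂] [FiniteDimensional K M] (f : M →ₗ[K] M₂) :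
    finrank K f.graph = finrank K M := by
  rw [LinearMap.graph_eq_range_prod]
  exact LinearMap.finrank_range_of_inj fun _ _ h => congrArg Prod.fst h

lemma Module.Basis.toDual_apply_eq_sum {ι R M : Type*} [Fintype ι] [DecidableEq ι] [CommRing R]
    [AddCommGroup M] [Module R M] (b : Basis ι R M) (v w : M) :
    b.toDual v w = ∑ i, b.repr v i * b.repr w i := by
  calc b.toDual v w = b.toDual v (∑ i, b.repr w i • b i) := by rw [b.sum_repr]
    _ = ∑ i, b.repr v i * b.repr w i := by
      simp only [map_sum, map_smul, smul_eq_mul, b.toDual_apply_left, mul_comm]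

lemma Module.Basis.toDual_apply_self_pos {ι V : Type*} [Fintype ι] [DecidableEq ι]
    [AddCommGroup V] [Module ℝ V] (b : Basis ι ℝ V) {v : V} (hv : v ≠ 0) :
    0 < b.toDual v v := by
  rw [b.toDual_apply_eq_sum]
  obtain ⟨i, hi⟩ : ∃ i, b.repr v i ≠ 0 := by
    by_contra! h
    exact hv (b.ext_elem_iff.mpr fun i => by simp [h i])
  exact Finset.sum_pos' (fun i _ => mul_self_nonneg _) ⟨i, Finset.mem_univ i, mul_self_pos.mpr hi⟩

section TwistedPairing

variable {V : Type*} [AddCommGroup V] [Module ℝ V]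

/-- The symmetric form `(x, y) ↦ b(S x, y)` on `V ⊕ V*`, where `S = diag(s, s*)`. -/
def twistedPairing (s : V →ₗ[ℝ] V) (x y : V × Dual ℝ V) : ℝ :=
  y.2 (s x.1) + x.2 (s y.1)

lemma twistedPairing_comm (s : V →ₗ[ℝ] V) (x y : V × Dual ℝ V) :
    twistedPairing s x y = twistedPairing s y x :=
  add_comm _ _

lemma twistedPairing_self_of_mem_graph (s : V →ₗ[ℝ] V) {f : V →ₗ[ℝ] Dual ℝ V}
    {x : V × Dual ℝ V} (hx : x ∈ f.graph) : twistedPairing s x x = 2 * f x.1 (s x.1) := by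
  rw [twistedPairing, (f.mem_graph_iff x).mp hx]
  ring

lemma fst_ne_zero_of_mem_graph {f : V →ₗ[ℝ] Dual ℝ V} {x : V × Dual ℝ V} (hx : x ∈ f.graph)
    (hx0 : x ≠ 0) : x.1 ≠ 0 := by
  intro h
  exact hx0 (Prod.ext h (by rw [(f.mem_graph_iff x).mp hx, h, map_zero]; rfl))

theorem hasSignature_twistedPairing [FiniteDimensional ℝ V] {s : V →ₗ[ℝ] V}
    (hs : Function.Injective s) :
    HasSignature (twistedPairing s) (finrank ℝ V) (finrank ℝ V) := by
  classical
  let G := (Module.finBasis ℝ V).toDual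
  have hGs : ∀ v, v ≠ 0 → 0 < G (s v) (s v) := fun v hv =>
    (Module.finBasis ℝ V).toDual_apply_self_pos ((map_ne_zero_iff s hs).mpr hv)
  have h := hasSignature_of_finrank_add_eq (β := twistedPairing s)
    (P := (G ∘ₗ s).graph) (N := (-(G ∘ₗ s)).graph)
    (fun x hx hx0 => by
      have := hGs _ (fst_ne_zero_of_mem_graph hx hx0)
      rw [twistedPairing_self_of_mem_graph s hx]
      simp only [LinearMap.comp_apply]
      positivity)
    (fun x hx hx0 => by
      have := hGs _ (fst_ne_zero_of_mem_graph hx hx0)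
      rw [twistedPairing_self_of_mem_graph s hx]
      simp only [LinearMap.neg_apply, LinearMap.comp_apply]
      linarith)
    (by rw [LinearMap.finrank_graph, LinearMap.finrank_graph, finrank_prod,
      Subspace.dual_finrank_eq])
  rwa [LinearMap.finrank_graph, LinearMap.finrank_graph] at h

end TwistedPairing

theorem stmt6_general (V : Type*) [AddCommGroup V] [Module ℝ V] [FiniteDimensional ℝ V]
    (m : ℕ) (hdim : Module.finrank ℝ V = 2 * m)
    (j : V →ₗ[ℝ] V) (hj : ∀ v, j (j v) = -v)
    (r : Module.End ℝ V) (hr2 : ∀ v, r (r v) = v)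
    (hrj : ∀ v, r (j v) = - j (r v))
    (b : (V × Module.Dual ℝ V) → (V × Module.Dual ℝ V) → ℝ)
    (hb : ∀ x y, b x y = y.2 x.1 + x.2 y.1)
    (J : (V × Module.Dual ℝ V) → (V × Module.Dual ℝ V))
    (hJ : ∀ x, J x = (j x.1, j.dualMap x.2))
    (R : (V × Module.Dual ℝ V) → (V × Module.Dual ℝ V))
    (hR : ∀ x, R x = (r x.1, -(r : V →ₗ[ℝ] V).dualMap x.2))
    (β : (V × Module.Dual ℝ V) → (V × Module.Dual ℝ V) → ℝ)
    (hβ : ∀ x y, β x y = b (R (J x)) y) :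
    (∀ x, R (J x) = - J (R x)) ∧
    (∀ x y, b (R x) y = - b x (R y)) ∧
    (∀ x, R (R x) = x) ∧
    (∀ x y, β x y = β y x) ∧
    HasSignature β (2 * m) (2 * m) := by
  have hjr : ∀ v, j (r v) = -r (j v) := fun v => by rw [hrj, neg_neg]
  have hrj_invol : Function.Involutive (r ∘ₗ j) := fun v => by
    simp only [LinearMap.comp_apply, hrj, map_neg, hr2, hj, neg_neg]
  have hβ_eq : β = twistedPairing (r ∘ₗ j) := by
    funext x y
    simp only [hβ, hJ, hR, hb, twistedPairing, LinearMap.comp_apply, LinearMap.dualMap_apply,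
      LinearMap.neg_apply, hjr, map_neg]
    ring
  refine ⟨fun x => ?_, fun x y => ?_, fun x => ?_, ?_, ?_⟩
  · ext v <;> simp [hJ, hR, hjr]
  · simp only [hR, hb, LinearMap.dualMap_apply, LinearMap.neg_apply]
    ring
  · ext v <;> simp [hR, hr2]
  · rw [hβ_eq]
    exact twistedPairing_comm _
  · rw [hβ_eq, ← hdim]
    exact hasSignature_twistedPairing hrj_invol.injective

/-- for a split paracomplex structure `r` on `V` anti-commuting with
`j`, `R = diag(r, -r*)` anti-commutes with `J₊`, is skew-symmetric for `b`,
squares to the identity, and `β_R(x,y) = b(R J₊ x, y)` is symmetric and split of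
signature `(2m, 2m)`. -/
theorem stmt6 (V : Type*) [AddCommGroup V] [Module ℝ V] [FiniteDimensional ℝ V]
    (m : ℕ) (hdim : Module.finrank ℝ V = 2 * m)
    (j : V →ₗ[ℝ] V) (hj : ∀ v, j (j v) = -v)
    (r : Module.End ℝ V) (hr2 : ∀ v, r (r v) = v)
    (hrj : ∀ v, r (j v) = - j (r v))
    (hrsplit : Module.finrank ℝ (r.eigenspace 1) = Module.finrank ℝ (r.eigenspace (-1)))
    (b : (V × Module.Dual ℝ V) → (V × Module.Dual ℝ V) → ℝ)
    (hb : ∀ x y, b x y = y.2 x.1 + x.2 y.1)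
    (J : (V × Module.Dual ℝ V) → (V × Module.Dual ℝ V))
    (hJ : ∀ x, J x = (j x.1, j.dualMap x.2))
    (R : (V × Module.Dual ℝ V) → (V × Module.Dual ℝ V))
    (hR : ∀ x, R x = (r x.1, -(r : V →ₗ[ℝ] V).dualMap x.2))
    (β : (V × Module.Dual ℝ V) → (V × Module.Dual ℝ V) → ℝ)
    (hβ : ∀ x y, β x y = b (R (J x)) y) :
    (∀ x, R (J x) = - J (R x)) ∧
    (∀ x y, b (R x) y = - b x (R y)) ∧
    (∀ x, R (R x) = x) ∧
    (∀ x y, β x y = β y x) ∧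
    HasSignature β (2 * m) (2 * m) :=
  stmt6_general V m hdim j hj r hr2 hrj b hb J hJ R hR β hβ
end

section
/- Let (V, j) be a real vector space with complex structure and ω a nondegenerate skew-symmetric bilinear form on V for which j is skew-symmetric (ω(ju, v) = −ω(u, jv)). Let Q be the endomorphism of E = V ⊕ V* with blocks Q(u+σ) = (ω♭)^{-1}(σ) + ω♭(u), where ω♭(u)(v) = ω(u, v). Then the symmetric form β_Q(x, y) = b(Q J₊ x, y) on E has signature (2n, 2·dim V − 2n) if and only if the symmetric form g(u, v) = ω(ju, v) on V has signature (n, dim V − n). In particular, under the isomorphism φ : V ⊕ V → E, φ(u, z) = u + ω♭(z), one has φ*β_Q((u,z),(v,w)) = g(u,v) + g(z,w). -/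
open Module QuadraticMap

namespace Submodule

variable {R M₁ M₂ : Type*} [Semiring R] [AddCommMonoid M₁] [Module R M₁] [AddCommMonoid M₂]
  [Module R M₂]

def prodEquiv (P₁ : Submodule R M₁) (P₂ : Submodule R M₂) : P₁.prod P₂ ≃ₗ[R] P₁ × P₂ where
  toFun x := (⟨x.1.1, x.2.1⟩, ⟨x.1.2, x.2.2⟩)
  invFun y := ⟨(y.1.1, y.2.1), y.1.2, y.2.2⟩
  map_add' _ _ := rfl
  map_smul' _ _ := rfl
  left_inv _ := rfl
  right_inv _ := rfl

theorem finrank_prod [StrongRankCondition R] (P₁ : Submodule R M₁) (P₂ : Submodule R M₂)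
    [Module.Free R P₁] [Module.Free R P₂] [Module.Finite R P₁] [Module.Finite R P₂] :
    finrank R (P₁.prod P₂) = finrank R P₁ + finrank R P₂ := by
  rw [(prodEquiv P₁ P₂).finrank_eq, Module.finrank_prod]

end Submodule

theorem QuadraticMap.PosDef.restrict_prod {R M₁ M₂ N : Type*} [CommSemiring R]
    [AddCommMonoid M₁] [Module R M₁] [AddCommMonoid M₂] [Module R M₂]
    [AddCommMonoid N] [Module R N] [PartialOrder N] [AddLeftMono N]
    {Q₁ : QuadraticMap R M₁ N} {Q₂ : QuadraticMap R M₂ N}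
    {P₁ : Submodule R M₁} {P₂ : Submodule R M₂} (h₁ : (Q₁.restrict P₁).PosDef)
    (h₂ : (Q₂.restrict P₂).PosDef) : ((Q₁.prod Q₂).restrict (P₁.prod P₂)).PosDef := by
  rintro ⟨x, hx⟩ hne
  obtain ⟨hx₁, hx₂⟩ := Submodule.mem_prod.mp hx
  simpa using (h₁.prod h₂) (⟨x.1, hx₁⟩, ⟨x.2, hx₂⟩) (by simpa [Prod.ext_iff] using hne)

section Signature

variable {𝕜 M₁ M₂ : Type*} [Field 𝕜]
  [AddCommGroup M₁] [Module 𝕜 M₁] [FiniteDimensional 𝕜 M₁]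
  [AddCommGroup M₂] [Module 𝕜 M₂] [FiniteDimensional 𝕜 M₂]

theorem finrank_radical_add_le_finrank_radical_prod (Q₁ : QuadraticForm 𝕜 M₁)
    (Q₂ : QuadraticForm 𝕜 M₂) :
    finrank 𝕜 Q₁.radical + finrank 𝕜 Q₂.radical ≤ finrank 𝕜 (Q₁.prod Q₂).radical := by
  rw [← Submodule.finrank_prod]
  refine Submodule.finrank_mono fun x hx => ?_
  obtain ⟨hx₁, hx₂⟩ := Submodule.mem_prod.mp hx
  rw [mem_radical_iff'] at hx₁ hx₂ ⊢
  exact ⟨by simp [hx₁.1, hx₂.1], fun y => by simp [hx₁.2, hx₂.2]⟩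

variable [LinearOrder 𝕜] [IsStrictOrderedRing 𝕜]

theorem sigPos_add_sigPos_le_sigPos_prod (Q₁ : QuadraticForm 𝕜 M₁) (Q₂ : QuadraticForm 𝕜 M₂) :
    sigPos Q₁ + sigPos Q₂ ≤ sigPos (Q₁.prod Q₂) := by
  obtain ⟨P₁, hP₁, hQ₁⟩ := exists_finrank_eq_sigPos_and_posDef Q₁
  obtain ⟨P₂, hP₂, hQ₂⟩ := exists_finrank_eq_sigPos_and_posDef Q₂
  rw [← hP₁, ← hP₂, ← Submodule.finrank_prod]
  exact le_sigPos_of_posDef _ (hQ₁.restrict_prod hQ₂)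

theorem sigNeg_add_sigNeg_le_sigNeg_prod (Q₁ : QuadraticForm 𝕜 M₁) (Q₂ : QuadraticForm 𝕜 M₂) :
    sigNeg Q₁ + sigNeg Q₂ ≤ sigNeg (Q₁.prod Q₂) := by
  have : -Q₁.prod Q₂ = (-Q₁).prod (-Q₂) := by ext; simp [add_comm]
  simpa [← sigPos_neg, this] using sigPos_add_sigPos_le_sigPos_prod (-Q₁) (-Q₂)

theorem sigPos_prod_and_sigNeg_prod (Q₁ : QuadraticForm 𝕜 M₁) (Q₂ : QuadraticForm 𝕜 M₂) :
    sigPos (Q₁.prod Q₂) = sigPos Q₁ + sigPos Q₂ ∧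
      sigNeg (Q₁.prod Q₂) = sigNeg Q₁ + sigNeg Q₂ := by
  have h₁ := QuadraticForm.sigPos_add_sigNeg_add_radical (Q := Q₁)
  have h₂ := QuadraticForm.sigPos_add_sigNeg_add_radical (Q := Q₂)
  have h := QuadraticForm.sigPos_add_sigNeg_add_radical (Q := Q₁.prod Q₂)
  have := sigPos_add_sigPos_le_sigPos_prod Q₁ Q₂
  have := sigNeg_add_sigNeg_le_sigNeg_prod Q₁ Q₂
  have := finrank_radical_add_le_finrank_radical_prod Q₁ Q₂
  rw [finrank_prod] at h
  omega

theorem LinearMap.BilinForm.sigPos_add_sigNeg_toQuadraticMap {B : LinearMap.BilinForm 𝕜 M₁}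
    (hB : ∀ x y, B x y = B y x) (hker : LinearMap.ker B = ⊥) :
    sigPos B.toQuadraticMap + sigNeg B.toQuadraticMap = finrank 𝕜 M₁ := by
  have : Invertible (2 : 𝕜) := invertibleOfNonzero two_ne_zero
  have h := QuadraticForm.sigPos_add_sigNeg_add_radical (Q := B.toQuadraticMap)
  rwa [radical_eq_ker_associated, associated_left_inverse 𝕜 hB, hker, finrank_bot,
    add_zero] at h

end Signature

section HasSignature

variable {E : Type*} [AddCommGroup E] [Module ℝ E] [FiniteDimensional ℝ E]

theorem sigPos_eq_iff (Q : QuadraticForm ℝ E) (p : ℕ) :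
    sigPos Q = p ↔ (∃ P : Submodule ℝ E, finrank ℝ P = p ∧ (Q.restrict P).PosDef) ∧
      ∀ P : Submodule ℝ E, (Q.restrict P).PosDef → finrank ℝ P ≤ p := by
  rw [← (sigPos_isGreatest Q).isGreatest_iff_eq, IsGreatest, upperBounds]
  simp only [Set.mem_ofPred_eq, forall_exists_index, and_imp]
  exact and_congr_right' ⟨fun h P => h P rfl, fun h _ P hP => hP ▸ h P⟩

theorem hasSignature_iff (Q : QuadraticForm ℝ E) {β : E → E → ℝ} (hQ : ∀ x, Q x = β x x)
    (p q : ℕ) : HasSignature β p q ↔ sigPos Q = p ∧ sigNeg Q = q := by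
  rw [sigPos_eq_iff, ← sigPos_neg, sigPos_eq_iff]
  simp only [HasSignature, PosDef, Subtype.forall, ne_eq, Submodule.mk_eq_zero, restrict_apply,
    neg_apply, hQ, neg_pos]

end HasSignature

/-- for `ω` symplectic with `j` skew-symmetric for `ω`, and
`Q(u+σ) = (ω♭)⁻¹σ + ω♭u`, the form `β_Q(x,y) = b(Q J₊ x, y)` has signature
`(2n, 2 dim V - 2n)` iff `g(u,v) = ω(ju,v)` has signature `(n, dim V - n)`;
and under `φ(u,z) = u + ω♭z` one has `φ*β_Q((u,z),(v,w)) = g(u,v) + g(z,w)`. -/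
theorem stmt7 (V : Type*) [AddCommGroup V] [Module ℝ V] [FiniteDimensional ℝ V]
    (j : V →ₗ[ℝ] V) (hj : ∀ v, j (j v) = -v)
    (ωb : V →ₗ[ℝ] Module.Dual ℝ V)
    (hωskew : ∀ u v, ωb u v = - ωb v u)
    (p : Module.Dual ℝ V →ₗ[ℝ] V)
    (hp1 : ∀ σ, ωb (p σ) = σ) (hp2 : ∀ u, p (ωb u) = u)
    (hjskew : ∀ u v, ωb (j u) v = - ωb u (j v))
    (g : V → V → ℝ) (hg : ∀ u v, g u v = ωb (j u) v)
    (b : (V × Module.Dual ℝ V) → (V × Module.Dual ℝ V) → ℝ)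
    (hb : ∀ x y, b x y = y.2 x.1 + x.2 y.1)
    (J : (V × Module.Dual ℝ V) → (V × Module.Dual ℝ V))
    (hJ : ∀ x, J x = (j x.1, j.dualMap x.2))
    (Q : (V × Module.Dual ℝ V) → (V × Module.Dual ℝ V))
    (hQ : ∀ x, Q x = (p x.2, ωb x.1))
    (β : (V × Module.Dual ℝ V) → (V × Module.Dual ℝ V) → ℝ)
    (hβ : ∀ x y, β x y = b (Q (J x)) y) :
    (∀ n : ℕ, HasSignature β (2 * n) (2 * Module.finrank ℝ V - 2 * n) ↔
      HasSignature g n (Module.finrank ℝ V - n)) ∧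
    (∀ u z v w : V, β (u, ωb z) (v, ωb w) = g u v + g z w) := by
  have hdual : ∀ z, j.dualMap (ωb z) = -ωb (j z) :=
    fun z => LinearMap.ext fun x => by simp [hjskew]
  have hpull : ∀ u z v w : V, β (u, ωb z) (v, ωb w) = g u v + g z w := by
    intro u z v w
    simp only [hβ, hJ, hQ, hb, hdual, ← map_neg, hp2, hg, hωskew (j z) w]
    ring
  refine ⟨fun n => ?_, hpull⟩
  let B : LinearMap.BilinForm ℝ V := ωb ∘ₗ j
  let φ : (V × V) ≃ₗ[ℝ] V × Module.Dual ℝ V := (LinearEquiv.refl ℝ V).prodCongr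
    (LinearEquiv.ofLinearMap ωb p (LinearMap.ext hp1) (LinearMap.ext hp2))
  let G := B.toQuadraticMap.prod B.toQuadraticMap
  let Gβ := G.comp (φ.symm : V × Module.Dual ℝ V →ₗ[ℝ] V × V)
  have hGβ : ∀ x, Gβ x = β x x := by
    intro x
    obtain ⟨⟨u, z⟩, rfl⟩ := φ.surjective x
    simp [Gβ, G, B, φ, hp2, hpull, hg]
  have hφ : G.Equivalent Gβ := ⟨G.isometryEquivOfCompLinearEquiv φ.symm⟩
  have hB : ∀ u v, B u v = B v u := fun u v => by
    simp only [B, LinearMap.comp_apply]; rw [hjskew, hωskew u, neg_neg]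
  have hker : LinearMap.ker B = ⊥ := by
    have hωb : Function.Injective ωb := Function.LeftInverse.injective hp2
    have hj' : Function.Injective j := fun u v h => neg_injective (by rw [← hj u, ← hj v, h])
    exact LinearMap.ker_eq_bot.mpr (hωb.comp hj')
  have hdim := LinearMap.BilinForm.sigPos_add_sigNeg_toQuadraticMap hB hker
  obtain ⟨hpos, hneg⟩ := sigPos_prod_and_sigNeg_prod B.toQuadraticMap B.toQuadraticMap
  rw [hasSignature_iff Gβ hGβ, hasSignature_iff B.toQuadraticMap (fun x => (hg x x).symm),
    ← hφ.sigPos_eq, ← hφ.sigNeg_eq, hpos, hneg]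
  omega
end

section
/- Let (V, ω) be a symplectic vector space, E = V ⊕ V*, and I_k as above (k = ±1). Let S be an endomorphism of E with S² = λ·id (λ = ±1), and set k = λℓ for ℓ = ±1. Then S is skew-symmetric for b and commutes with I_k if and only if b_k(Sx, Sy) = −λ·b_k(x, y) for all x, y ∈ E, where b₋(x,y) = b(x,y) − i b(x, I₋y) and b₊ is defined analogously with the Lorentz-number unit ε: b₊(x,y) = b(x,y) + ε b(x, I₊y). -/
/-!
Since `S² = λ` and `λ² = 1`, `S` is invertible with inverse `λS`; substituting `y ↦ λSy` turns
`b(Sx, Sy) = -λ b(x, y)` into skewness of `S`. For skew `S`, the second identity reads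
`b(x, SISy) = λ b(x, Iy)`, which by nondegeneracy of `b` means `SIS = λI`, i.e. `SI = IS`.
-/

theorem Module.End.apply_smul_apply_eq_self {R M : Type*} [CommRing R] [AddCommGroup M]
    [Module R M] {S : Module.End R M} {lam : R} (hlam : lam * lam = 1)
    (hS : ∀ x, S (S x) = lam • x) (x : M) : S (lam • S x) = x := by
  rw [map_smul, hS, smul_smul, hlam, one_smul]

namespace LinearMap.BilinForm

open Module.End

variable {R M : Type*} [CommRing R] [AddCommGroup M] [Module R M]
  {B : LinearMap.BilinForm R M} {S : Module.End R M} {lam : R}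

theorem skew_iff_apply_apply_eq_neg_mul (hlam : lam * lam = 1) (hS : ∀ x, S (S x) = lam • x) :
    (∀ x y, B (S x) y = -B x (S y)) ↔ ∀ x y, B (S x) (S y) = -lam * B x y := by
  refine ⟨fun hskew x y => ?_, fun h x y => ?_⟩
  · rw [hskew, hS, map_smul, smul_eq_mul, neg_mul]
  · calc B (S x) y = B (S x) (S (lam • S y)) := by rw [apply_smul_apply_eq_self hlam hS]
      _ = -lam * (lam * B x (S y)) := by rw [h, map_smul, smul_eq_mul]
      _ = -B x (S y) := by linear_combination (-B x (S y)) * hlam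

theorem commute_iff_apply_apply_eq_neg_mul (hlam : lam * lam = 1) (hS : ∀ x, S (S x) = lam • x)
    (hB : B.SeparatingRight) (hskew : ∀ x y, B (S x) y = -B x (S y)) (I : Module.End R M) :
    (∀ x, S (I x) = I (S x)) ↔ ∀ x y, B (S x) (I (S y)) = -lam * B x (I y) := by
  refine ⟨fun hcomm x y => ?_, fun h => ?_⟩
  · rw [← hcomm, hskew, hS, map_smul, smul_eq_mul, neg_mul]
  · have hSIS : ∀ y, S (I (S y)) = lam • I y := fun y => by
      refine sub_eq_zero.1 (hB _ fun x => ?_)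
      rw [map_sub, map_smul, smul_eq_mul]
      linear_combination hskew x (I (S y)) - h x y
    intro x
    calc S (I x) = S (I (S (lam • S x))) := by rw [apply_smul_apply_eq_self hlam hS]
      _ = I (S x) := by rw [hSIS, map_smul, smul_smul, hlam, one_smul]

end LinearMap.BilinForm

namespace LinearMap

variable (R M : Type*) [CommRing R] [AddCommGroup M] [Module R M]

def prodDual : LinearMap.BilinForm R (M × Module.Dual R M) :=
  LinearMap.mk₂ R (fun x y => y.2 x.1 + x.2 y.1)
    (fun _ _ _ => by simp only [Prod.fst_add, Prod.snd_add, map_add, add_apply]; ring)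
    (fun _ _ _ => by simp only [Prod.smul_fst, Prod.smul_snd, map_smul, smul_apply, smul_eq_mul]; ring)
    (fun _ _ _ => by simp only [Prod.fst_add, Prod.snd_add, map_add, add_apply]; ring)
    (fun _ _ _ => by simp only [Prod.smul_fst, Prod.smul_snd, map_smul, smul_apply, smul_eq_mul]; ring)

theorem prodDual_apply (x y : M × Module.Dual R M) : prodDual R M x y = y.2 x.1 + x.2 y.1 := rfl

theorem separatingRight_prodDual [Module.Projective R M] : (prodDual R M).SeparatingRight := by
  rintro ⟨u, σ⟩ h
  have hσ : σ = 0 := LinearMap.ext fun v => by simpa [prodDual_apply] using h (v, 0)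
  have hu : u = 0 := (Module.forall_dual_apply_eq_zero_iff R u).1 fun φ => by
    simpa [prodDual_apply] using h (0, φ)
  rw [hu, hσ, Prod.mk_zero_zero]

end LinearMap

theorem stmt14_general (V : Type*) [AddCommGroup V] [Module ℝ V]
    (ωb : V →ₗ[ℝ] Module.Dual ℝ V)
    (p : Module.Dual ℝ V →ₗ[ℝ] V)
    (lam ℓ : ℝ) (hlam : lam = 1 ∨ lam = -1)
    (b : (V × Module.Dual ℝ V) → (V × Module.Dual ℝ V) → ℝ)
    (hb : ∀ x y, b x y = y.2 x.1 + x.2 y.1)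
    (I : (V × Module.Dual ℝ V) → (V × Module.Dual ℝ V))
    (hI : ∀ x, I x = ((lam * ℓ) • p x.2, ωb x.1))
    (S : Module.End ℝ (V × Module.Dual ℝ V))
    (hS2 : ∀ x, S (S x) = lam • x) :
    ((∀ x y, b (S x) y = - b x (S y)) ∧ (∀ x, S (I x) = I (S x))) ↔
    (∀ x y, b (S x) (S y) = -lam * b x y ∧
      b (S x) (I (S y)) = -lam * b x (I y)) := by
  have hlam2 : lam * lam = 1 := by rcases hlam with rfl | rfl <;> norm_num
  have hb_prodDual : ∀ x y, b x y = LinearMap.prodDual ℝ V x y := hb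
  let Iₗ : Module.End ℝ (V × Module.Dual ℝ V) :=
    ((lam * ℓ) • p ∘ₗ LinearMap.snd ℝ V _).prod (ωb ∘ₗ LinearMap.fst ℝ V _)
  have hI_linear : ∀ x, I x = Iₗ x := hI
  simp only [hb_prodDual, hI_linear, forall_and]
  rw [← LinearMap.BilinForm.skew_iff_apply_apply_eq_neg_mul hlam2 hS2]
  exact and_congr_right fun hskew => LinearMap.BilinForm.commute_iff_apply_apply_eq_neg_mul hlam2
    hS2 (LinearMap.separatingRight_prodDual ℝ V) hskew Iₗ

/-- for `S` with `S² = λ·id` and `k = λℓ`, `S` is skew-symmetric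
for `b` and commutes with `I_k` iff `b_k(Sx, Sy) = -λ·b_k(x,y)` for all `x, y`.
Here `b₋(x,y) = b(x,y) - i b(x, I₋y)` (ℂ-valued) and
`b₊(x,y) = b(x,y) + ε b(x, I₊y)` (𝕃-valued, `ε² = 1`); in both cases the
equality `b_k(Sx,Sy) = -λ b_k(x,y)` amounts to its two real components:
`b(Sx,Sy) = -λ b(x,y)` and `b(Sx, I_k(Sy)) = -λ b(x, I_k y)`. -/
theorem stmt14 (V : Type*) [AddCommGroup V] [Module ℝ V] [FiniteDimensional ℝ V]
    (ωb : V →ₗ[ℝ] Module.Dual ℝ V)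
    (hωskew : ∀ u v, ωb u v = - ωb v u)
    (p : Module.Dual ℝ V →ₗ[ℝ] V)
    (hp1 : ∀ σ, ωb (p σ) = σ) (hp2 : ∀ u, p (ωb u) = u)
    (lam ℓ : ℝ) (hlam : lam = 1 ∨ lam = -1) (hℓ : ℓ = 1 ∨ ℓ = -1)
    (b : (V × Module.Dual ℝ V) → (V × Module.Dual ℝ V) → ℝ)
    (hb : ∀ x y, b x y = y.2 x.1 + x.2 y.1)
    (I : (V × Module.Dual ℝ V) → (V × Module.Dual ℝ V))
    (hI : ∀ x, I x = ((lam * ℓ) • p x.2, ωb x.1))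
    (S : Module.End ℝ (V × Module.Dual ℝ V))
    (hS2 : ∀ x, S (S x) = lam • x) :
    ((∀ x y, b (S x) y = - b x (S y)) ∧ (∀ x, S (I x) = I (S x))) ↔
    (∀ x y, b (S x) (S y) = -lam * b x y ∧
      b (S x) (I (S y)) = -lam * b x (I y)) :=
  stmt14_general V ωb p lam ℓ hlam b hb I hI S hS2
end

section
/- Let (V, ω) be a symplectic vector space, E = V ⊕ V*. Suppose S is an endomorphism of E that is skew-symmetric for b, satisfies S² = λ·id (λ = ±1), and commutes with I_{λℓ} (ℓ = ±1). Then S has the block form S(u + σ) = (Au + λℓ B(ω♭)^{-1}σ) + (ω♭ B u − A*σ), where A, B are endomorphisms of V satisfying λA² + ℓB² = id, AB + BA = 0, and ω♭A = −A*ω♭. -/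
/-!
Write `A` for the `V → V` block of `S` and `ω♭B` for its `V → V*` block. Skew-symmetry of `S` for
the canonical pairing forces the `V* → V*` block to be `-A*`, and commuting with `I_{λℓ}` forces
the `V* → V` block to be `λℓ B (ω♭)⁻¹` together with `ω♭A = -A*ω♭`. Reading off the blocks of
`S² = λ` and using `λ² = 1` then gives `λA² + ℓB² = 1` and `AB + BA = 0`.
-/

open Module LinearMap

namespace ProdDualEnd

variable {R V : Type*} [CommRing R] [AddCommGroup V] [Module R V]

def canonicalPairing (x y : V × Dual R V) : R := y.2 x.1 + x.2 y.1

def blockFst (S : End R (V × Dual R V)) : V →ₗ[R] V :=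
  fst R V (Dual R V) ∘ₗ S ∘ₗ inl R V (Dual R V)

def blockSnd (S : End R (V × Dual R V)) : V →ₗ[R] Dual R V :=
  snd R V (Dual R V) ∘ₗ S ∘ₗ inl R V (Dual R V)

variable {S : End R (V × Dual R V)}

theorem apply_inl (u : V) : S (u, 0) = (blockFst S u, blockSnd S u) := rfl

theorem apply_eq_apply_inl_add_apply_inr (x : V × Dual R V) : S x = S (x.1, 0) + S (0, x.2) := by
  rw [← map_add, Prod.mk_add_mk, add_zero, zero_add]

theorem snd_apply_inr_of_skew
    (hskew : ∀ x y, canonicalPairing (S x) y = -canonicalPairing x (S y)) (σ : Dual R V) :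
    (S (0, σ)).2 = -(blockFst S).dualMap σ := by
  ext u
  have h := hskew (u, 0) (0, σ)
  simp only [canonicalPairing, map_zero, add_zero, LinearMap.zero_apply] at h
  simp [h, blockFst]

variable {ωb : V →ₗ[R] Dual R V} {p : Dual R V →ₗ[R] V} {k : R}
  {I : V × Dual R V → V × Dual R V}

theorem apply_inr_of_commute (hI : ∀ x, I x = (k • p x.2, ωb x.1))
    (hcomm : ∀ x, S (I x) = I (S x)) (u : V) :
    S (0, ωb u) = (k • p (blockSnd S u), ωb (blockFst S u)) := by
  have h := hcomm (u, 0)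
  simp only [hI, map_zero, smul_zero] at h
  exact h

theorem flat_blockFst_eq_neg_dualMap (hI : ∀ x, I x = (k • p x.2, ωb x.1))
    (hcomm : ∀ x, S (I x) = I (S x))
    (hskew : ∀ x y, canonicalPairing (S x) y = -canonicalPairing x (S y)) (v : V) :
    ωb (blockFst S v) = -(blockFst S).dualMap (ωb v) := by
  rw [← snd_apply_inr_of_skew hskew, apply_inr_of_commute hI hcomm]

theorem apply_eq_block_form (hp : ∀ σ, ωb (p σ) = σ) (hI : ∀ x, I x = (k • p x.2, ωb x.1))
    (hcomm : ∀ x, S (I x) = I (S x))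
    (hskew : ∀ x y, canonicalPairing (S x) y = -canonicalPairing x (S y)) (x : V × Dual R V) :
    S x = (blockFst S x.1 + k • (p ∘ₗ blockSnd S) (p x.2),
      ωb ((p ∘ₗ blockSnd S) x.1) - (blockFst S).dualMap x.2) := by
  have hinr : (S (0, x.2)).1 = k • p (blockSnd S (p x.2)) := by
    rw [← hp x.2, apply_inr_of_commute hI hcomm, hp]
  rw [apply_eq_apply_inl_add_apply_inr x, apply_inl, Prod.ext_iff]
  simp [hinr, snd_apply_inr_of_skew hskew, hp, sub_eq_add_neg]

theorem apply_apply_inl_of_block_form {A B : V →ₗ[R] V} (hp : ∀ u, p (ωb u) = u)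
    (hS : ∀ x, S x = (A x.1 + k • B (p x.2), ωb (B x.1) - A.dualMap x.2))
    (hA : ∀ v, ωb (A v) = -A.dualMap (ωb v)) (v : V) :
    S (S (v, 0)) = (A (A v) + k • B (B v), ωb (B (A v) + A (B v))) := by
  have hA' (w : V) : A.dualMap (ωb w) = -ωb (A w) := by rw [hA, neg_neg]
  simp [hS, hp, hA']

end ProdDualEnd

theorem smul_add_smul_eq_of_add_mul_smul_eq {R M : Type*} [CommRing R] [AddCommGroup M]
    [Module R M] {lam ℓ : R} (hlam : lam * lam = 1) {a b v : M} (h : a + (lam * ℓ) • b = lam • v) :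
    lam • a + ℓ • b = v := by
  have := congrArg (lam • ·) h
  simpa only [smul_add, smul_smul, ← mul_assoc, hlam, one_mul, one_smul] using this

theorem stmt15_general (V : Type*) [AddCommGroup V] [Module ℝ V]
    (ωb : V →ₗ[ℝ] Module.Dual ℝ V)
    (p : Module.Dual ℝ V →ₗ[ℝ] V)
    (hp1 : ∀ σ, ωb (p σ) = σ) (hp2 : ∀ u, p (ωb u) = u)
    (lam ℓ : ℝ) (hlam : lam = 1 ∨ lam = -1)
    (b : (V × Module.Dual ℝ V) → (V × Module.Dual ℝ V) → ℝ)
    (hb : ∀ x y, b x y = y.2 x.1 + x.2 y.1)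
    (I : (V × Module.Dual ℝ V) → (V × Module.Dual ℝ V))
    (hI : ∀ x, I x = ((lam * ℓ) • p x.2, ωb x.1))
    (S : Module.End ℝ (V × Module.Dual ℝ V))
    (hS2 : ∀ x, S (S x) = lam • x)
    (hskew : ∀ x y, b (S x) y = - b x (S y))
    (hcomm : ∀ x, S (I x) = I (S x)) :
    ∃ A B : V →ₗ[ℝ] V,
      (∀ x : V × Module.Dual ℝ V,
        S x = (A x.1 + (lam * ℓ) • B (p x.2), ωb (B x.1) - A.dualMap x.2)) ∧
      (∀ v, lam • A (A v) + ℓ • B (B v) = v) ∧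
      (∀ v, A (B v) + B (A v) = 0) ∧
      (∀ v, ωb (A v) = - A.dualMap (ωb v)) := by
  obtain rfl : b = ProdDualEnd.canonicalPairing := funext₂ hb
  have hblock := ProdDualEnd.apply_eq_block_form hp1 hI hcomm hskew
  have hA := ProdDualEnd.flat_blockFst_eq_neg_dualMap hI hcomm hskew
  have hsq (v : V) :=
    (hS2 (v, 0)).symm.trans (ProdDualEnd.apply_apply_inl_of_block_form hp2 hblock hA v)
  refine ⟨_, _, hblock, fun v ↦ ?_, fun v ↦ ?_, hA⟩
  · refine smul_add_smul_eq_of_add_mul_smul_eq (by rcases hlam with rfl | rfl <;> norm_num) ?_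
    simpa using (Prod.ext_iff.1 (hsq v)).1.symm
  · simpa [add_comm, hp2] using congrArg p (Prod.ext_iff.1 (hsq v)).2.symm

/-- a `b`-skew-symmetric endomorphism `S` of `E = V ⊕ V*` with
`S² = λ·id` commuting with `I_{λℓ}` has the block form
`S(u+σ) = (Au + λℓ B (ω♭)⁻¹σ) + (ω♭Bu - A*σ)` with `λA² + ℓB² = id`,
`AB + BA = 0`, and `ω♭A = -A*ω♭`. -/
theorem stmt15 (V : Type*) [AddCommGroup V] [Module ℝ V] [FiniteDimensional ℝ V]
    (ωb : V →ₗ[ℝ] Module.Dual ℝ V)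
    (hωskew : ∀ u v, ωb u v = - ωb v u)
    (p : Module.Dual ℝ V →ₗ[ℝ] V)
    (hp1 : ∀ σ, ωb (p σ) = σ) (hp2 : ∀ u, p (ωb u) = u)
    (lam ℓ : ℝ) (hlam : lam = 1 ∨ lam = -1) (hℓ : ℓ = 1 ∨ ℓ = -1)
    (b : (V × Module.Dual ℝ V) → (V × Module.Dual ℝ V) → ℝ)
    (hb : ∀ x y, b x y = y.2 x.1 + x.2 y.1)
    (I : (V × Module.Dual ℝ V) → (V × Module.Dual ℝ V))
    (hI : ∀ x, I x = ((lam * ℓ) • p x.2, ωb x.1))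
    (S : Module.End ℝ (V × Module.Dual ℝ V))
    (hS2 : ∀ x, S (S x) = lam • x)
    (hskew : ∀ x y, b (S x) y = - b x (S y))
    (hcomm : ∀ x, S (I x) = I (S x)) :
    ∃ A B : V →ₗ[ℝ] V,
      (∀ x : V × Module.Dual ℝ V,
        S x = (A x.1 + (lam * ℓ) • B (p x.2), ωb (B x.1) - A.dualMap x.2)) ∧
      (∀ v, lam • A (A v) + ℓ • B (B v) = v) ∧
      (∀ v, A (B v) + B (A v) = 0) ∧
      (∀ v, ωb (A v) = - A.dualMap (ωb v)) :=
  stmt15_general V ωb p hp1 hp2 lam ℓ hlam b hb I hI S hS2 hskew hcomm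
end

section
/- Let 𝕃 = ℝ[ε] (ε² = 1) be the Lorentz numbers with conjugation a + εb ↦ a − εb, and on 𝕃^{2m} consider the 𝕃-Hermitian form B₊(Z, Z') = conj(Z)ᵗ Z'. Let e = (1−ε)/2 and ē = (1+ε)/2. Then every 𝕃-linear isometry of (𝕃^{2m}, B₊) has the form Â(xe + yē) = (Ax)e + ((Aᵗ)^{-1}y)ē for a unique A ∈ GL(2m, ℝ); in particular the 𝕃-unitary group of B₊ is isomorphic to GL(2m, ℝ). -/
/-!
In the idempotent coordinates, `𝕃`-linearity says that `L` acts on the two components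
separately: `L (x, y) = (f x, g y)` with `f`, `g` real-linear. One component of the invariance
of `B₊` reads `⟪g y, f x⟫ = ⟪y, x⟫`, i.e. `Gᵀ F = 1` for the matrices `F`, `G` of `f`, `g`.
Hence `F` is invertible with `G = (F⁻¹)ᵀ`, and `A = F` is forced by `L (x, 0) = (A x, 0)`.
-/

open Matrix

theorem Matrix.transpose_mul_eq_one_of_dotProduct_mulVec {n R : Type*} [Fintype n] [DecidableEq n]
    [CommSemiring R] {A B : Matrix n n R} (h : ∀ x y, (B *ᵥ y) ⬝ᵥ (A *ᵥ x) = y ⬝ᵥ x) :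
    Bᵀ * A = 1 := by
  refine mulVec_injective (funext fun x => dotProduct_eq _ _ fun y => ?_)
  rw [← mulVec_mulVec, one_mulVec, dotProduct_comm, dotProduct_mulVec, vecMul_transpose,
    h, dotProduct_comm]

theorem exists_linearMap_eq_pair_of_map_smul_pair {R M N M' N' : Type*} [Semiring R]
    [AddCommMonoid M] [AddCommMonoid N] [AddCommMonoid M'] [AddCommMonoid N']
    [Module R M] [Module R N] [Module R M'] [Module R N'] (L : M × N → M' × N')
    (hadd : ∀ z z', L (z + z') = L z + L z')
    (hsmul : ∀ (a b : R) z, L (a • z.1, b • z.2) = (a • (L z).1, b • (L z).2)) :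
    ∃ (f : M →ₗ[R] M') (g : N →ₗ[R] N'), ∀ z, L z = (f z.1, g z.2) := by
  let ℓ : M × N →ₗ[R] M' × N' :=
    { toFun := L
      map_add' := hadd
      map_smul' := fun a z => hsmul a a z }
  refine ⟨LinearMap.fst R M' N' ∘ₗ ℓ ∘ₗ LinearMap.inl R M N,
    LinearMap.snd R M' N' ∘ₗ ℓ ∘ₗ LinearMap.inr R M N, fun z => ?_⟩
  have h₁ := hsmul 1 0 z
  have h₂ := hsmul 0 1 z
  simp only [one_smul, zero_smul] at h₁ h₂
  simp [ℓ, h₁, h₂]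

/-- In the coordinates `Z = xe + yē`, the `𝕃`-scalar `ae + bē` acts by `(x, y) ↦ (ax, by)`
and `B₊(Z, Z')` has components `(yᵗx', xᵗy')`. -/
theorem stmt18_general (m : ℕ)
    (L : ((Fin (2 * m) → ℝ) × (Fin (2 * m) → ℝ)) →
      ((Fin (2 * m) → ℝ) × (Fin (2 * m) → ℝ)))
    (hadd : ∀ z z', L (z + z') = L z + L z')
    (hsmul : ∀ (a b : ℝ) z, L (a • z.1, b • z.2) = (a • (L z).1, b • (L z).2))
    (hiso1 : ∀ z z', ∑ i, (L z).2 i * (L z').1 i = ∑ i, z.2 i * z'.1 i) :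
    ∃! A : GL (Fin (2 * m)) ℝ, ∀ z,
      L z = ((A : Matrix (Fin (2 * m)) (Fin (2 * m)) ℝ).mulVec z.1,
        ((A⁻¹ : GL (Fin (2 * m)) ℝ) : Matrix (Fin (2 * m)) (Fin (2 * m)) ℝ).transpose.mulVec z.2) := by
  obtain ⟨f, g, hL⟩ := exists_linearMap_eq_pair_of_map_smul_pair L hadd hsmul
  set A := LinearMap.toMatrix' f
  set B := LinearMap.toMatrix' g
  have hBA : Bᵀ * A = 1 := transpose_mul_eq_one_of_dotProduct_mulVec fun x y => by
    simpa [A, B, hL, dotProduct] using hiso1 (0, y) (x, 0)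
  refine ⟨⟨A, Bᵀ, mul_eq_one_comm.mpr hBA, hBA⟩, fun z => by simp [A, B, hL z], ?_⟩
  intro A' hA'
  refine Units.ext (mulVec_injective (funext fun x => ?_))
  simpa [A, hL] using (congrArg Prod.fst (hA' (x, 0))).symm

/-- in the idempotent coordinates `Z = xe + yē` of `𝕃^{2m}`
(Lorentz numbers `𝕃 = ℝ[ε]`, `ε² = 1`, `e = (1-ε)/2`, `ē = (1+ε)/2`, so that an
`𝕃`-scalar `ae + bē` acts as `(a,b)·(x,y) = (ax, by)` and the `𝕃`-Hermitian
form `B₊(Z,Z') = conj(Z)ᵗZ'` has components `(yᵗx', xᵗy')`), every `𝕃`-linear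
isometry `L` of `(𝕃^{2m}, B₊)` has the form
`Â(xe + yē) = (Ax)e + ((Aᵗ)⁻¹y)ē` for a unique `A ∈ GL(2m, ℝ)`. -/
theorem stmt18 (m : ℕ)
    (L : ((Fin (2 * m) → ℝ) × (Fin (2 * m) → ℝ)) →
      ((Fin (2 * m) → ℝ) × (Fin (2 * m) → ℝ)))
    (hadd : ∀ z z', L (z + z') = L z + L z')
    (hsmul : ∀ (a b : ℝ) z, L (a • z.1, b • z.2) = (a • (L z).1, b • (L z).2))
    (hiso1 : ∀ z z', ∑ i, (L z).2 i * (L z').1 i = ∑ i, z.2 i * z'.1 i)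
    (hiso2 : ∀ z z', ∑ i, (L z).1 i * (L z').2 i = ∑ i, z.1 i * z'.2 i) :
    ∃! A : GL (Fin (2 * m)) ℝ, ∀ z,
      L z = ((A : Matrix (Fin (2 * m)) (Fin (2 * m)) ℝ).mulVec z.1,
        ((A⁻¹ : GL (Fin (2 * m)) ℝ) : Matrix (Fin (2 * m)) (Fin (2 * m)) ℝ).transpose.mulVec z.2) :=
  stmt18_general m L hadd hsmul hiso1
end
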